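/- Let Γ̃ ∈ M_n(ℂ), C ∈ ℂ with C ≠ 0, and let R, Θ, X ∈ M_n(ℂ) and V ∈ ℂⁿ satisfy: R² = (1/4)·Γ̃² − |C|²·I, R·Γ̃ = Γ̃·R, Θ·Γ̃ = Γ̃·Θ, Θ·R = R·Θ, and Γ̃·X + X·Γ̃ᴴ = V·Vᴴ. Define cosh(M) := (exp(M) + exp(−M))/2, sinh(M) := (exp(M) − exp(−M))/2, η̃₁ := cosh(Θ)·V, η̃₂ := (1/(2·conj(C)))·( cosh(Θ)·Γ̃ − 2·R·sinh(Θ) )·V, and Ω := cosh(Θ)·X·cosh(Θᴴ) + (1/(4|C|²))·cosh(Θ)·Γ̃·X·Γ̃ᴴ·cosh(Θᴴ) + (1/|C|²)·sinh(Θ)·R·X·Rᴴ·sinh(Θᴴ) − (1/(2|C|²))·( sinh(Θ)·R·X·Γ̃ᴴ·cosh(Θᴴ) + cosh(Θ)·Γ̃·X·Rᴴ·sinh(Θᴴ) ). Then Γ̃·Ω + Ω·Γ̃ᴴ = η̃₁·η̃₁ᴴ + η̃₂·η̃₂ᴴ. -/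

import Mathlib

open Matrix

/-- A vector of ℂⁿ viewed as an n×1 column matrix. -/
def colV {n : ℕ} (η : Fin n → ℂ) : Matrix (Fin n) (Fin 1) ℂ :=
  Matrix.of fun i _ => η i

/-- Hyperbolic cosine of a square complex matrix. -/
noncomputable def coshM {n : ℕ} (M : Matrix (Fin n) (Fin n) ℂ) :
    Matrix (Fin n) (Fin n) ℂ :=
  ((2 : ℂ)⁻¹) • (NormedSpace.exp M + NormedSpace.exp (-M))

/-- Hyperbolic sine of a square complex matrix. -/
noncomputable def sinhM {n : ℕ} (M : Matrix (Fin n) (Fin n) ℂ) :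
    Matrix (Fin n) (Fin n) ℂ :=
  ((2 : ℂ)⁻¹) • (NormedSpace.exp M - NormedSpace.exp (-M))

/-!
With `c = cosh Θ`, `s = sinh Θ` and `M = ½ c Γ̃ - s R`, one has
`Ω = c X cᴴ + |C|⁻² M X Mᴴ` and `η̃₂ = C̄⁻¹ M V`. Since `c` and `M` commute with `Γ̃`,
a congruence `X ↦ A X Aᴴ` by either of them carries the Lyapunov equation
`Γ̃ X + X Γ̃ᴴ = V Vᴴ` to `Γ̃ (A X Aᴴ) + (A X Aᴴ) Γ̃ᴴ = (A V)(A V)ᴴ`,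
and the two congruences add up.
-/

theorem lyapunov_congr {R : Type*} [Semiring R] [StarRing R] {Γ X W A : R}
    (hX : Γ * X + X * star Γ = W) (hA : Commute Γ A) :
    Γ * (A * X * star A) + A * X * star A * star Γ = A * W * star A := by
  have hA' : star A * star Γ = star Γ * star A := by
    rw [← star_mul, ← star_mul, hA.eq]
  rw [← hX, mul_add, add_mul, ← mul_assoc Γ, ← mul_assoc Γ, hA.eq, mul_assoc (A * X),
    hA', ← mul_assoc, mul_assoc A Γ, mul_assoc A X]

section HyperbolicFunctions

variable {n : ℕ}

theorem Commute.coshM_right {A Θ : Matrix (Fin n) (Fin n) ℂ} (h : Commute A Θ) :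
    Commute A (coshM Θ) :=
  (h.exp_right.add_right h.neg_right.exp_right).smul_right _

theorem Commute.sinhM_right {A Θ : Matrix (Fin n) (Fin n) ℂ} (h : Commute A Θ) :
    Commute A (sinhM Θ) :=
  (h.exp_right.sub_right h.neg_right.exp_right).smul_right _

theorem coshM_conjTranspose (Θ : Matrix (Fin n) (Fin n) ℂ) : coshM Θᴴ = (coshM Θ)ᴴ := by
  simp [coshM, ← conjTranspose_neg, exp_conjTranspose]

theorem sinhM_conjTranspose (Θ : Matrix (Fin n) (Fin n) ℂ) : sinhM Θᴴ = (sinhM Θ)ᴴ := by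
  simp [sinhM, ← conjTranspose_neg, exp_conjTranspose]

end HyperbolicFunctions

theorem stmt_14_general {n : ℕ} (Γt : Matrix (Fin n) (Fin n) ℂ)
    (C : ℂ)
    (R Θ X : Matrix (Fin n) (Fin n) ℂ) (V : Fin n → ℂ)
    (hRΓ : R * Γt = Γt * R) (hΘΓ : Θ * Γt = Γt * Θ) (hΘR : Θ * R = R * Θ)
    (hX : Γt * X + X * Γtᴴ = colV V * (colV V)ᴴ)
    (ηt₁ ηt₂ : Matrix (Fin n) (Fin 1) ℂ)
    (hηt₁ : ηt₁ = coshM Θ * colV V)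
    (hηt₂ : ηt₂ = (1 / (2 * (starRingEnd ℂ) C)) •
        ((coshM Θ * Γt - 2 • (R * sinhM Θ)) * colV V))
    (Ω : Matrix (Fin n) (Fin n) ℂ)
    (hΩ : Ω = coshM Θ * X * coshM (Θᴴ)
        + (1 / (4 * ((Complex.normSq C : ℝ) : ℂ))) •
            (coshM Θ * Γt * X * Γtᴴ * coshM (Θᴴ))
        + (1 / ((Complex.normSq C : ℝ) : ℂ)) •
            (sinhM Θ * R * X * Rᴴ * sinhM (Θᴴ))
        - (1 / (2 * ((Complex.normSq C : ℝ) : ℂ))) •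
            (sinhM Θ * R * X * Γtᴴ * coshM (Θᴴ)
              + coshM Θ * Γt * X * Rᴴ * sinhM (Θᴴ))) :
    Γt * Ω + Ω * Γtᴴ = ηt₁ * ηt₁ᴴ + ηt₂ * ηt₂ᴴ := by
  set c := coshM Θ
  set s := sinhM Θ
  set M := (2 : ℂ)⁻¹ • (c * Γt) - s * R
  have hc : Commute Γt c := (Commute.symm hΘΓ).coshM_right
  have hs : Commute Γt s := (Commute.symm hΘΓ).sinhM_right
  have hRs : Commute R s := (Commute.symm hΘR).sinhM_right
  have hM : Commute Γt M :=
    ((hc.mul_right (.refl Γt)).smul_right _).sub_right (hs.mul_right (Commute.symm hRΓ))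
  have hΩM : Ω = c * X * cᴴ + (Complex.normSq C : ℂ)⁻¹ • (M * X * Mᴴ) := by
    rw [hΩ, coshM_conjTranspose, sinhM_conjTranspose]
    simp only [M, conjTranspose_sub, conjTranspose_smul, conjTranspose_mul, star_inv₀, star_ofNat,
      mul_sub, sub_mul, smul_mul_assoc, mul_smul_comm, mul_assoc]
    match_scalars <;> ring
  have hη₂M : ηt₂ = (starRingEnd ℂ C)⁻¹ • (M * colV V) := by
    rw [hηt₂, hRs.eq]
    simp only [M, two_smul, Matrix.add_mul, Matrix.sub_mul, Matrix.smul_mul]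
    match_scalars <;> ring
  have hnormSq :
      star (starRingEnd ℂ C)⁻¹ * (starRingEnd ℂ C)⁻¹ = (Complex.normSq C : ℂ)⁻¹ := by
    rw [star_inv₀, Complex.star_def, Complex.conj_conj, ← mul_inv, Complex.mul_conj]
  rw [hΩM, hηt₁, hη₂M]
  calc Γt * (c * X * cᴴ + (Complex.normSq C : ℂ)⁻¹ • (M * X * Mᴴ))
        + (c * X * cᴴ + (Complex.normSq C : ℂ)⁻¹ • (M * X * Mᴴ)) * Γtᴴ
      = (Γt * (c * X * cᴴ) + c * X * cᴴ * Γtᴴ)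
        + (Complex.normSq C : ℂ)⁻¹ • (Γt * (M * X * Mᴴ) + M * X * Mᴴ * Γtᴴ) := by
        simp only [mul_add, add_mul, mul_smul_comm, smul_mul_assoc, smul_add]
        abel
    _ = c * (colV V * (colV V)ᴴ) * cᴴ
        + (Complex.normSq C : ℂ)⁻¹ • (M * (colV V * (colV V)ᴴ) * Mᴴ) :=
        congrArg₂ (· + ·) (lyapunov_congr hX hc) (congrArg _ (lyapunov_congr hX hM))
    _ = _ := by
        simp only [conjTranspose_smul, conjTranspose_mul, Matrix.smul_mul, Matrix.mul_smul,
          smul_smul, hnormSq, Matrix.mul_assoc]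

theorem stmt_14 {n : ℕ} (Γt : Matrix (Fin n) (Fin n) ℂ)
    (C : ℂ) (hC : C ≠ 0)
    (R Θ X : Matrix (Fin n) (Fin n) ℂ) (V : Fin n → ℂ)
    (hR : R * R = ((1 : ℂ)/4) • (Γt * Γt)
        - ((Complex.normSq C : ℝ) : ℂ) • (1 : Matrix (Fin n) (Fin n) ℂ))
    (hRΓ : R * Γt = Γt * R) (hΘΓ : Θ * Γt = Γt * Θ) (hΘR : Θ * R = R * Θ)
    (hX : Γt * X + X * Γtᴴ = colV V * (colV V)ᴴ)
    (ηt₁ ηt₂ : Matrix (Fin n) (Fin 1) ℂ)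
    (hηt₁ : ηt₁ = coshM Θ * colV V)
    (hηt₂ : ηt₂ = (1 / (2 * (starRingEnd ℂ) C)) •
        ((coshM Θ * Γt - 2 • (R * sinhM Θ)) * colV V))
    (Ω : Matrix (Fin n) (Fin n) ℂ)
    (hΩ : Ω = coshM Θ * X * coshM (Θᴴ)
        + (1 / (4 * ((Complex.normSq C : ℝ) : ℂ))) •
            (coshM Θ * Γt * X * Γtᴴ * coshM (Θᴴ))
        + (1 / ((Complex.normSq C : ℝ) : ℂ)) •
            (sinhM Θ * R * X * Rᴴ * sinhM (Θᴴ))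
        - (1 / (2 * ((Complex.normSq C : ℝ) : ℂ))) •
            (sinhM Θ * R * X * Γtᴴ * coshM (Θᴴ)
              + coshM Θ * Γt * X * Rᴴ * sinhM (Θᴴ))) :
    Γt * Ω + Ω * Γtᴴ = ηt₁ * ηt₁ᴴ + ηt₂ * ηt₂ᴴ :=
  stmt_14_general Γt C R Θ X V hRΓ hΘΓ hΘR hX ηt₁ ηt₂ hηt₁ hηt₂ Ω hΩ
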